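/- Let (r_i)_{i≥1} be an increasing sequence of elements of |F^×| with r_i → ∞. Suppose that for each i we are given g_i ∈ A^m(r_i), and for each pair i < j a unit u_{i,j} of A^m(r_i), such that g_i = u_{i,j}·g_j holds in A^m(r_i). Then there exist an entire function G on F^m and units v_i of A^m(r_i) such that g_i = G·v_i in A^m(r_i) for every i. -/

import Mathlib

open MvPowerSeries Filter

set_option linter.unusedSectionVars false

namespace NA

variable (F : Type) [NormedField F] [IsUltrametricDist F]

/-- The value group `|F^×|` of a normed field, as a set of real numbers. -/
def VG : Set ℝ := {r | ∃ c : F, c ≠ 0 ∧ ‖c‖ = r}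

lemma VG.pos {r : ℝ} (hr : r ∈ VG F) : 0 < r := by
  obtain ⟨c, hc, rfl⟩ := hr
  exact norm_pos_iff.mpr hc

/-- The total degree `|γ|` of a multi-index. -/
def mdeg {m : ℕ} (γ : Fin m →₀ ℕ) : ℕ := γ.sum fun _ n => n

lemma mdeg_add {m : ℕ} (α β : Fin m →₀ ℕ) : mdeg (α + β) = mdeg α + mdeg β :=
  Finsupp.sum_add_index' (fun _ => rfl) (fun _ _ _ => rfl)

/-- The ring `A^m(r)` of power series converging on the closed ball of radius `r`:
those `f = Σ a_γ z^γ` with `|a_γ| r^{|γ|} → 0` as `|γ| → ∞`. -/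
def A (m : ℕ) (r : ℝ) : Subring (MvPowerSeries (Fin m) F) where
  carrier := {f | Tendsto (fun γ : Fin m →₀ ℕ => ‖coeff γ f‖ * r ^ mdeg γ)
    cofinite (nhds 0)}
  zero_mem' := by
    simp only [Set.mem_setOf_eq, map_zero, norm_zero, zero_mul]
    exact tendsto_const_nhds
  one_mem' := by
    refine tendsto_const_nhds.congr' ?_
    refine Filter.eventuallyEq_of_mem ((Set.finite_singleton (0 : Fin m →₀ ℕ)).compl_mem_cofinite) ?_
    intro γ hγ
    have : (γ : Fin m →₀ ℕ) ≠ 0 := by simpa using hγ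
    simp [MvPowerSeries.coeff_one, this]
  add_mem' := by
    intro f g hf hg
    simp only [Set.mem_setOf_eq] at hf hg ⊢
    rw [tendsto_zero_iff_abs_tendsto_zero] at hf hg ⊢
    refine squeeze_zero (fun γ => abs_nonneg _) (fun γ => ?_) (by simpa using hf.add hg)
    simp only [Function.comp_apply, abs_mul, abs_norm, map_add, ← add_mul, abs_pow]
    exact mul_le_mul_of_nonneg_right (norm_add_le _ _) (by positivity)
  neg_mem' := by
    intro f hf
    simpa only [Set.mem_setOf_eq, map_neg, norm_neg] using hf
  mul_mem' := by
    intro f g hf hg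
    simp only [Set.mem_setOf_eq] at hf hg ⊢
    rw [tendsto_zero_iff_abs_tendsto_zero] at hf hg ⊢
    have habs : ∀ (h : MvPowerSeries (Fin m) F),
        (abs ∘ fun γ : Fin m →₀ ℕ => ‖coeff γ h‖ * r ^ mdeg γ)
          = fun γ => ‖coeff γ h‖ * |r| ^ mdeg γ := by
      intro h; funext γ
      simp [Function.comp_apply, abs_mul, abs_pow]
    rw [habs] at hf hg ⊢
    set v := fun (h : MvPowerSeries (Fin m) F) (γ : Fin m →₀ ℕ) =>
      ‖coeff γ h‖ * |r| ^ mdeg γ with hv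
    have vnonneg : ∀ h γ, 0 ≤ v h γ := fun h γ => by positivity
    have finlt : ∀ (h : MvPowerSeries (Fin m) F),
        Tendsto (v h) cofinite (nhds 0) → ∀ δ : ℝ, 0 < δ → {γ | ¬ v h γ < δ}.Finite := by
      intro h hh δ hδ
      have := (Metric.tendsto_nhds.mp hh) δ hδ
      rw [Filter.eventually_cofinite] at this
      refine this.subset ?_
      intro γ hγ
      simp only [Set.mem_setOf_eq, Real.dist_eq, sub_zero] at *
      intro hc; exact hγ (lt_of_abs_lt hc)
    have bound : ∀ (h : MvPowerSeries (Fin m) F),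
        Tendsto (v h) cofinite (nhds 0) → ∃ M : ℝ, 1 ≤ M ∧ ∀ γ, v h γ ≤ M := by
      intro h hh
      have h1 := finlt h hh 1 one_pos
      refine ⟨1 + ∑ γ ∈ h1.toFinset, v h γ,
        le_add_of_nonneg_right (Finset.sum_nonneg fun γ _ => vnonneg h γ), ?_⟩
      intro γ
      by_cases hγ : γ ∈ h1.toFinset
      · have := Finset.single_le_sum (f := v h) (fun γ _ => vnonneg h γ) hγ
        linarith
      · simp only [Set.Finite.mem_toFinset, Set.mem_setOf_eq, not_not] at hγ
        have hs : (0:ℝ) ≤ ∑ γ ∈ h1.toFinset, v h γ :=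
          Finset.sum_nonneg fun γ _ => vnonneg h γ
        linarith
    rw [Metric.tendsto_nhds]
    intro ε hε
    rw [Filter.eventually_cofinite]
    obtain ⟨Mf, hMf1, hMf⟩ := bound f hf
    obtain ⟨Mg, hMg1, hMg⟩ := bound g hg
    set M := max Mf Mg with hMdef
    have hM1 : (1:ℝ) ≤ M := le_trans hMf1 (le_max_left _ _)
    have hM0 : (0:ℝ) < M := lt_of_lt_of_le one_pos hM1
    set δ := ε / M with hδdef
    have hδ0 : 0 < δ := div_pos hε hM0
    have hSf := finlt f hf δ hδ0
    have hSg := finlt g hg δ hδ0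
    refine ((hSf.prod hSg).image
      (fun p : (Fin m →₀ ℕ) × (Fin m →₀ ℕ) => p.1 + p.2)).subset ?_
    intro γ hγ
    simp only [Set.mem_setOf_eq, Real.dist_eq, sub_zero] at hγ
    have hγ' : ε ≤ v (f * g) γ := by
      rw [abs_of_nonneg (vnonneg (f*g) γ)] at hγ
      exact not_lt.mp hγ
    have hne : (Finset.HasAntidiagonal.antidiagonal γ).Nonempty := ⟨(γ, 0), by simp⟩
    obtain ⟨p, hp, hple⟩ := IsUltrametricDist.exists_norm_finset_sum_le_of_nonempty hne
      (fun p : (Fin m →₀ ℕ) × (Fin m →₀ ℕ) => coeff p.1 f * coeff p.2 g)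
    have hpsum : p.1 + p.2 = γ := Finset.HasAntidiagonal.mem_antidiagonal.mp hp
    have key : v (f * g) γ ≤ v f p.1 * v g p.2 := by
      have hdeg : mdeg γ = mdeg p.1 + mdeg p.2 := by
        rw [← hpsum, mdeg_add]
      calc v (f * g) γ = ‖coeff γ (f * g)‖ * |r| ^ mdeg γ := rfl
        _ ≤ ‖coeff p.1 f * coeff p.2 g‖ * |r| ^ mdeg γ := by
            refine mul_le_mul_of_nonneg_right ?_ (by positivity)
            rw [MvPowerSeries.coeff_mul]
            exact hple
        _ = (‖coeff p.1 f‖ * |r| ^ mdeg p.1) * (‖coeff p.2 g‖ * |r| ^ mdeg p.2) := by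
            rw [norm_mul, hdeg, pow_add]; ring
    refine ⟨p, ⟨?_, ?_⟩, hpsum⟩
    · simp only [Set.mem_setOf_eq, not_lt]
      have h1 : ε ≤ v f p.1 * M := by
        refine hγ'.trans (key.trans ?_)
        exact mul_le_mul_of_nonneg_left ((hMg p.2).trans (le_max_right _ _)) (vnonneg f p.1)
      exact (div_le_iff₀ hM0).mpr h1
    · simp only [Set.mem_setOf_eq, not_lt]
      have h1 : ε ≤ M * v g p.2 := by
        refine hγ'.trans (key.trans ?_)
        exact mul_le_mul_of_nonneg_right ((hMf p.1).trans (le_max_left _ _)) (vnonneg g p.2)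
      rw [hδdef, div_le_iff₀' hM0]
      exact h1

lemma mem_A_iff {m : ℕ} {r : ℝ} {f : MvPowerSeries (Fin m) F} :
    f ∈ A F m r ↔ Tendsto (fun γ : Fin m →₀ ℕ => ‖coeff γ f‖ * r ^ mdeg γ)
      cofinite (nhds 0) := Iff.rfl

instance {m : ℕ} : IsDomain (MvPowerSeries (Fin m) F) :=
  NoZeroDivisors.to_isDomain _

/-- The Gauss norm `|f|_r = sup_γ |a_γ| r^{|γ|}`. -/
noncomputable def nrm (r : ℝ) {m : ℕ} (f : MvPowerSeries (Fin m) F) : ℝ :=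
  ⨆ γ : Fin m →₀ ℕ, ‖coeff γ f‖ * r ^ mdeg γ

/-- For `0 < r ≤ R`, `A^m(R) ⊆ A^m(r)`. -/
lemma A_mono {m : ℕ} {r R : ℝ} (h0 : 0 < r) (hrR : r ≤ R) : A F m R ≤ A F m r := by
  intro f hf
  rw [mem_A_iff] at hf ⊢
  refine squeeze_zero (fun γ => by positivity) (fun γ => ?_) hf
  exact mul_le_mul_of_nonneg_left (pow_le_pow_left₀ h0.le hrR _) (norm_nonneg _)

/-- Evaluation of a power series at a point, as a (possibly junk) sum. -/
noncomputable def eval {m : ℕ} (f : MvPowerSeries (Fin m) F) (z : Fin m → F) : F :=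
  ∑' γ : Fin m →₀ ℕ, coeff γ f * ∏ i, z i ^ (γ i)

/-- The ring of integers `{a : |a| ≤ 1}` of `F`. -/
def O : Subring F where
  carrier := {a | ‖a‖ ≤ 1}
  zero_mem' := by simp
  one_mem' := by simp
  add_mem' := by
    intro a b ha hb
    exact (IsUltrametricDist.norm_add_le_max a b).trans (max_le ha hb)
  neg_mem' := by intro a ha; simpa using ha
  mul_mem' := by
    intro a b ha hb
    rw [Set.mem_setOf_eq, norm_mul]
    exact mul_le_one₀ ha (norm_nonneg b) hb

/-- The maximal ideal `{a : |a| < 1}` of the ring of integers. -/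
def mIdeal : Ideal (O F) where
  carrier := {a | ‖(a : F)‖ < 1}
  zero_mem' := by simp
  add_mem' := by
    intro a b ha hb
    exact lt_of_le_of_lt (IsUltrametricDist.norm_add_le_max (a : F) b) (max_lt ha hb)
  smul_mem' := by
    intro c a ha
    simp only [Set.mem_setOf_eq, smul_eq_mul] at ha ⊢
    rw [Subring.coe_mul, norm_mul]
    exact mul_lt_one_of_nonneg_of_lt_one_right c.2 (norm_nonneg _) ha

/-- The residue class field of `F`. -/
def Res := O F ⧸ mIdeal F

noncomputable instance : CommRing (Res F) := by unfold Res; infer_instance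

/-- Reduction of an element of absolute value at most `1` to the residue field. -/
noncomputable def red (a : F) (h : ‖a‖ ≤ 1) : Res F :=
  Ideal.Quotient.mk (mIdeal F) ⟨a, h⟩

/-- The ring of entire functions on `F^m`: power series lying in every `A^m(r)`. -/
def Ent (m : ℕ) : Subring (MvPowerSeries (Fin m) F) where
  carrier := {f | ∀ r ∈ VG F, f ∈ A F m r}
  zero_mem' := fun r _ => (A F m r).zero_mem
  one_mem' := fun r _ => (A F m r).one_mem
  add_mem' := fun hf hg r hr => (A F m r).add_mem (hf r hr) (hg r hr)
  neg_mem' := fun hf r hr => (A F m r).neg_mem (hf r hr)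
  mul_mem' := fun hf hg r hr => (A F m r).mul_mem (hf r hr) (hg r hr)

lemma mem_Ent_iff {m : ℕ} {f : MvPowerSeries (Fin m) F} :
    f ∈ Ent F m ↔ ∀ r ∈ VG F, f ∈ A F m r := Iff.rfl

/-- `d` is a greatest common divisor of the family `s`. -/
def IsGCDOf {α : Type*} [CommRing α] {ι : Type*} (d : α) (s : ι → α) : Prop :=
  (∀ i, d ∣ s i) ∧ ∀ e : α, (∀ i, e ∣ s i) → e ∣ d

section LastVariable

variable (m : ℕ)

/-- The subring of power series in `m+1` variables not depending on the last variable. -/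
def indepLast : Subring (MvPowerSeries (Fin (m+1)) F) where
  carrier := {f | ∀ γ : Fin (m+1) →₀ ℕ, γ (Fin.last m) ≠ 0 → coeff γ f = 0}
  zero_mem' := by intro γ _; simp
  one_mem' := by
    intro γ hγ
    have h : γ ≠ 0 := fun h => hγ (by simp [h])
    simp [MvPowerSeries.coeff_one, h]
  add_mem' := by
    intro f g hf hg γ hγ
    simp [map_add, hf γ hγ, hg γ hγ]
  neg_mem' := by
    intro f hf γ hγ
    simp [hf γ hγ]
  mul_mem' := by
    intro f g hf hg γ hγ
    rw [MvPowerSeries.coeff_mul]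
    refine Finset.sum_eq_zero fun p hp => ?_
    have hpsum : p.1 + p.2 = γ := Finset.HasAntidiagonal.mem_antidiagonal.mp hp
    by_cases h1 : p.1 (Fin.last m) = 0
    · have h2 : p.2 (Fin.last m) ≠ 0 := by
        intro h2
        apply hγ
        rw [← hpsum, Finsupp.add_apply, h1, h2]
      rw [hg p.2 h2, mul_zero]
    · rw [hf p.1 h1, zero_mul]

/-- The ring `A^{m-1}(r)`: analytic functions not depending on the last variable. -/
noncomputable def Aprev (r : ℝ) : Subring (MvPowerSeries (Fin (m+1)) F) :=
  A F (m+1) r ⊓ indepLast F m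

lemma Aprev_le (r : ℝ) : Aprev F m r ≤ A F (m+1) r := inf_le_left

lemma X_mem (r : ℝ) {k : ℕ} (i : Fin k) : (X i : MvPowerSeries (Fin k) F) ∈ A F k r := by
  rw [mem_A_iff]
  refine tendsto_const_nhds.congr' ?_
  refine Filter.eventuallyEq_of_mem
    ((Set.finite_singleton (Finsupp.single i 1)).compl_mem_cofinite) ?_
  intro γ hγ
  have h : γ ≠ Finsupp.single i 1 := by simpa using hγ
  simp [MvPowerSeries.X, MvPowerSeries.coeff_monomial, h]

/-- The last coordinate function `z_m` as an element of `A^m(r)`. -/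
noncomputable def zmA (r : ℝ) : A F (m+1) r :=
  ⟨X (Fin.last m), X_mem F r (Fin.last m)⟩

/-- Interpret a polynomial `W ∈ A^{m-1}(r)[z_m]` as an analytic function in `A^m(r)`. -/
noncomputable def toAm (r : ℝ) (W : Polynomial (Aprev F m r)) : A F (m+1) r :=
  Polynomial.eval₂ (Subring.inclusion (Aprev_le F m r)) (zmA F m r) W

/-- `W ∈ A^{m-1}(r)[z_m]` is a Weierstrass polynomial of degree `n = deg W`:
it is monic and `|W|_r = r^n`. -/
def IsWeierstrass (r : ℝ) (W : Polynomial (Aprev F m r)) : Prop :=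
  W.Monic ∧ nrm F r ((toAm F m r W : A F (m+1) r) : MvPowerSeries (Fin (m+1)) F)
    = r ^ W.natDegree

/-- The coefficient `A_j` of `z_m^j` when `f` is written as `Σ_j A_j(z') z_m^j`,
viewed as a power series not involving the last variable. -/
noncomputable def slice (f : MvPowerSeries (Fin (m+1)) F) (j : ℕ) :
    MvPowerSeries (Fin (m+1)) F :=
  fun γ => if γ (Fin.last m) = 0 then
    coeff (γ + Finsupp.single (Fin.last m) j) f else 0

/-- `f` is `z_m`-distinguished of degree `n` in `A^m(r)`: writing `f = Σ_j A_j z_m^j`,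
`A_n` is a unit in `A^{m-1}(r)`, `|f|_r = |A_n|_r r^n`, and `|A_j|_r r^j < |A_n|_r r^n`
for `j > n`. -/
def IsDistinguished (r : ℝ) (f : MvPowerSeries (Fin (m+1)) F) (n : ℕ) : Prop :=
  (∃ h : slice F m f n ∈ Aprev F m r, IsUnit (⟨slice F m f n, h⟩ : Aprev F m r)) ∧
  nrm F r f = nrm F r (slice F m f n) * r ^ n ∧
  ∀ j : ℕ, n < j → nrm F r (slice F m f j) * r ^ j < nrm F r (slice F m f n) * r ^ n

/-- The linear forms `z_i + u_i z_m` (and `z_m` for `i = m`) defining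
the change of variables `σ_u`. -/
noncomputable def linSub (u : Fin m → F) (i : Fin (m+1)) : MvPolynomial (Fin (m+1)) F :=
  MvPolynomial.X i + (if h : (i : ℕ) < m then
    MvPolynomial.C (u ⟨i, h⟩) * MvPolynomial.X (Fin.last m) else 0)

/-- The composition `f ∘ σ_u`, where
`σ_u(z_1,…,z_m) = (z_1 + u_1 z_m, …, z_{m-1} + u_{m-1} z_m, z_m)`. -/
noncomputable def sigmaSub (u : Fin m → F) (f : MvPowerSeries (Fin (m+1)) F) :
    MvPowerSeries (Fin (m+1)) F :=
  fun δ => ∑ t ∈ Finset.Nat.antidiagonalTuple (m+1) (mdeg δ),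
    coeff (Finsupp.equivFunOnFinite.symm t) f *
      MvPolynomial.coeff δ (∏ i, linSub F m u i ^ t i)

end LastVariable

/-- The formal partial derivative `∂f/∂z_j` of a power series. -/
noncomputable def pderiv {m : ℕ} (j : Fin m) (f : MvPowerSeries (Fin m) F) :
    MvPowerSeries (Fin m) F :=
  fun γ => ((γ j + 1 : ℕ) : F) * coeff (γ + Finsupp.single j 1) f

/-!
Normalize the transition units `u_{i,i+1}` to have constant term `1`. Multiplicativity of the
Gauss norm (proved with a lexicographically largest dominant monomial) shows that a unit of
`A^m(r)` has Gauss norm `|f(0)|`, so a normalized unit `q_k` satisfies `|q_k - 1|_{r_s} ≤ r_s / r_k`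
for `s ≤ k`. The rescaled `g_n` therefore converge, at every radius `r_s`, to
`(∏_{k ≥ s} q_k) g_s` with a convergent product that is a unit of `A^m(r_s)`; the limit lies in
every `A^m(r_s)`, hence is entire.
-/

open scoped Topology MvPowerSeries.WithPiTopology

section GaussTerm

variable {F} {m : ℕ} {r : ℝ} {f g : MvPowerSeries (Fin m) F}

/-- `nrm F r f` is the supremum of `gaussTerm r f`; bounds `|f|_r ≤ M` are stated termwise, as
`∀ γ, gaussTerm r f γ ≤ M`, which avoids the junk value of `nrm` on unbounded families. -/
noncomputable def gaussTerm (r : ℝ) (f : MvPowerSeries (Fin m) F) (γ : Fin m →₀ ℕ) : ℝ :=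
  ‖coeff γ f‖ * r ^ mdeg γ

lemma gaussTerm_nonneg (hr : 0 ≤ r) (f : MvPowerSeries (Fin m) F) (γ : Fin m →₀ ℕ) :
    0 ≤ gaussTerm r f γ := by
  unfold gaussTerm; positivity

lemma gaussTerm_zero_index (r : ℝ) (f : MvPowerSeries (Fin m) F) :
    gaussTerm r f 0 = ‖constantCoeff f‖ := by
  simp [gaussTerm, mdeg]

lemma gaussTerm_one_le (r : ℝ) (γ : Fin m →₀ ℕ) :
    gaussTerm r (1 : MvPowerSeries (Fin m) F) γ ≤ 1 := by
  by_cases h : γ = 0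
  · simp [h, gaussTerm_zero_index]
  · simp [gaussTerm, coeff_one, h]

lemma gaussTerm_add_le (hr : 0 ≤ r) (f g : MvPowerSeries (Fin m) F) (γ : Fin m →₀ ℕ) :
    gaussTerm r (f + g) γ ≤ max (gaussTerm r f γ) (gaussTerm r g γ) := by
  rw [gaussTerm, gaussTerm, gaussTerm, ← max_mul_of_nonneg _ _ (by positivity), map_add]
  gcongr
  exact IsUltrametricDist.norm_add_le_max _ _

lemma gaussTerm_mul_gaussTerm (r : ℝ) (f g : MvPowerSeries (Fin m) F) (α β : Fin m →₀ ℕ) :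
    gaussTerm r f α * gaussTerm r g β = ‖coeff α f * coeff β g‖ * r ^ mdeg (α + β) := by
  rw [gaussTerm, gaussTerm, norm_mul, mdeg_add, pow_add]; ring

lemma gaussTerm_mul_le (hr : 0 ≤ r) {a b : ℝ} (hf : ∀ γ, gaussTerm r f γ ≤ a)
    (hg : ∀ γ, gaussTerm r g γ ≤ b) (γ : Fin m →₀ ℕ) : gaussTerm r (f * g) γ ≤ a * b := by
  have ha : 0 ≤ a := (gaussTerm_nonneg hr f 0).trans (hf 0)
  obtain ⟨p, hp, hle⟩ := IsUltrametricDist.exists_norm_finsetSum_le_of_nonempty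
    ⟨(γ, 0), Finset.HasAntidiagonal.mem_antidiagonal.mpr (add_zero γ)⟩
    fun p : (Fin m →₀ ℕ) × (Fin m →₀ ℕ) => coeff p.1 f * coeff p.2 g
  rw [Finset.HasAntidiagonal.mem_antidiagonal] at hp
  calc gaussTerm r (f * g) γ ≤ ‖coeff p.1 f * coeff p.2 g‖ * r ^ mdeg γ := by
        rw [gaussTerm, coeff_mul]; gcongr
    _ = gaussTerm r f p.1 * gaussTerm r g p.2 := by rw [gaussTerm_mul_gaussTerm, hp]
    _ ≤ a * b := mul_le_mul (hf _) (hg _) (gaussTerm_nonneg hr _ _) ha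

lemma gaussTerm_le_div_mul (hr : 0 < r) {R M : ℝ} (hrR : r ≤ R) (hf0 : constantCoeff f = 0)
    (hM : ∀ γ, gaussTerm R f γ ≤ M) (γ : Fin m →₀ ℕ) : gaussTerm r f γ ≤ r / R * M := by
  have hR : 0 < R := hr.trans_le hrR
  have hM0 : 0 ≤ M := (gaussTerm_nonneg hR.le f 0).trans (hM 0)
  rcases eq_or_ne γ 0 with rfl | hγ
  · rw [gaussTerm_zero_index, hf0, norm_zero]; positivity
  have hdeg : 1 ≤ mdeg γ := by
    obtain ⟨i, hi⟩ := Finsupp.support_nonempty_iff.mpr hγ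
    exact (Nat.one_le_iff_ne_zero.mpr (Finsupp.mem_support_iff.mp hi)).trans
      (Finset.single_le_sum (fun _ _ => Nat.zero_le _) hi)
  calc gaussTerm r f γ = gaussTerm R f γ * (r / R) ^ mdeg γ := by
        rw [gaussTerm, gaussTerm, div_pow, mul_assoc, mul_div_cancel₀ _ (by positivity)]
    _ ≤ M * (r / R) ^ 1 :=
        mul_le_mul (hM γ) (pow_le_pow_of_le_one (by positivity) (div_le_one_of_le₀ hrR hR.le) hdeg)
          (by positivity) hM0
    _ = r / R * M := by ring

lemma finite_setOf_le_gaussTerm (hf : f ∈ A F m r) {δ : ℝ} (hδ : 0 < δ) :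
    {γ | δ ≤ gaussTerm r f γ}.Finite := by
  simpa only [not_lt, gaussTerm] using
    eventually_cofinite.mp (((mem_A_iff F).mp hf).eventually (gt_mem_nhds hδ))

end GaussTerm

section Units

variable {F} {m : ℕ} {r : ℝ} {f g : MvPowerSeries (Fin m) F}

open Finset.HasAntidiagonal

def IsLeadingIndex (r : ℝ) (f : MvPowerSeries (Fin m) F) (γ₀ : Fin m →₀ ℕ) : Prop :=
  ∀ γ, gaussTerm r f γ ≤ gaussTerm r f γ₀ ∧
    (gaussTerm r f γ = gaussTerm r f γ₀ → toLex γ ≤ toLex γ₀)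

lemma exists_isLeadingIndex (hf : f ∈ A F m r) (hr : 0 < r) (hf0 : f ≠ 0) :
    ∃ γ₀, 0 < gaussTerm r f γ₀ ∧ IsLeadingIndex r f γ₀ := by
  classical
  obtain ⟨γ₁, hγ₁⟩ : ∃ γ, coeff γ f ≠ 0 := by
    by_contra! h
    exact hf0 (ext fun γ => by simpa using h γ)
  have hpos : 0 < gaussTerm r f γ₁ := mul_pos (norm_pos_iff.mpr hγ₁) (pow_pos hr _)
  set S := (finite_setOf_le_gaussTerm hf hpos).toFinset
  have hγ₁S : γ₁ ∈ S := by simp [S]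
  obtain ⟨γₘ, hγₘS, hγₘ⟩ := S.exists_max_image (gaussTerm r f) ⟨γ₁, hγ₁S⟩
  set T := S.filter (gaussTerm r f · = gaussTerm r f γₘ)
  obtain ⟨γ₀, hγ₀T, hγ₀⟩ := T.exists_max_image toLex ⟨γₘ, by simp [T, hγₘS]⟩
  obtain ⟨hγ₀S, hγ₀m⟩ := Finset.mem_filter.mp hγ₀T
  have hmax : ∀ γ, gaussTerm r f γ ≤ gaussTerm r f γ₀ := by
    intro γ
    rw [hγ₀m]
    by_cases hγ : γ ∈ S
    · exact hγₘ γ hγ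
    · exact (not_le.mp (by simpa [S] using hγ)).le.trans (hγₘ γ₁ hγ₁S)
  refine ⟨γ₀, hpos.trans_le (hmax γ₁), fun γ => ⟨hmax γ, fun hγ => hγ₀ γ ?_⟩⟩
  exact Finset.mem_filter.mpr ⟨by simpa [S, hγ] using hmax γ₁, hγ.trans hγ₀m⟩

/-- Every other product in the convolution is strictly smaller: it misses a maximal factor, or
it is beaten lexicographically, the lexicographic order being compatible with addition. -/
lemma gaussTerm_mul_add_of_isLeadingIndex (hr : 0 < r) {γ₀ δ₀ : Fin m →₀ ℕ}
    (hf : IsLeadingIndex r f γ₀) (hg : IsLeadingIndex r g δ₀)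
    (hf0 : 0 < gaussTerm r f γ₀) (hg0 : 0 < gaussTerm r g δ₀) :
    gaussTerm r (f * g) (γ₀ + δ₀) = gaussTerm r f γ₀ * gaussTerm r g δ₀ := by
  have hlt : ∀ p ∈ antidiagonal (γ₀ + δ₀), p ≠ (γ₀, δ₀) →
      gaussTerm r f p.1 * gaussTerm r g p.2 < gaussTerm r f γ₀ * gaussTerm r g δ₀ := by
    intro p hp hne
    rcases (hf p.1).1.lt_or_eq with h₁ | h₁
    · calc gaussTerm r f p.1 * gaussTerm r g p.2 ≤ gaussTerm r f p.1 * gaussTerm r g δ₀ :=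
            mul_le_mul_of_nonneg_left (hg p.2).1 (gaussTerm_nonneg hr.le _ _)
        _ < _ := mul_lt_mul_of_pos_right h₁ hg0
    rcases (hg p.2).1.lt_or_eq with h₂ | h₂
    · rw [h₁]; exact mul_lt_mul_of_pos_left h₂ hf0
    have hsum : toLex p.1 + toLex p.2 = toLex γ₀ + toLex δ₀ :=
      congrArg toLex (mem_antidiagonal.mp hp)
    obtain ⟨e₁, e₂⟩ := (add_eq_add_iff_eq_and_eq ((hf p.1).2 h₁) ((hg p.2).2 h₂)).mp hsum
    exact absurd (Prod.ext (toLex.injective e₁) (toLex.injective e₂)) hne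
  have hpow : 0 < r ^ mdeg (γ₀ + δ₀) := pow_pos hr _
  rw [gaussTerm, coeff_mul, IsNonarchimedean.apply_sum_eq_of_lt (k := (γ₀, δ₀))
      IsUltrametricDist.isNonarchimedean_norm (fun _ => (norm_neg _).symm)
      (mem_antidiagonal.mpr rfl) fun p hp hne => ?_,
    gaussTerm_mul_gaussTerm]
  have h := hlt p hp hne
  rw [gaussTerm_mul_gaussTerm, gaussTerm_mul_gaussTerm,
    mem_antidiagonal.mp hp] at h
  exact lt_of_mul_lt_mul_right h hpow.le

/-- By multiplicativity, the leading indices of `f` and of its inverse `g` add up to `0`. -/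
lemma gaussTerm_le_of_mul_eq_one (hr : 0 < r) (hf : f ∈ A F m r) (hg : g ∈ A F m r)
    (hfg : f * g = 1) (γ : Fin m →₀ ℕ) : gaussTerm r f γ ≤ ‖constantCoeff f‖ := by
  obtain ⟨γ₀, hf0, hγ₀⟩ := exists_isLeadingIndex hf hr (left_ne_zero_of_mul_eq_one hfg)
  obtain ⟨δ₀, hg0, hδ₀⟩ := exists_isLeadingIndex hg hr (right_ne_zero_of_mul_eq_one hfg)
  have hone := gaussTerm_mul_add_of_isLeadingIndex hr hγ₀ hδ₀ hf0 hg0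
  have hγδ : γ₀ + δ₀ = 0 := by
    by_contra h
    rw [hfg] at hone
    simp only [gaussTerm, coeff_one, h, if_false, norm_zero, zero_mul] at hone
    exact (mul_pos hf0 hg0).ne hone
  rw [← gaussTerm_zero_index, ← (add_eq_zero.mp hγδ).1]
  exact (hγ₀ γ).1

end Units

section Limits

variable {F} {m : ℕ} {r : ℝ}

lemma mem_A_of_gaussTerm_sub_le {S : ℕ → MvPowerSeries (Fin m) F} {L : MvPowerSeries (Fin m) F}
    (hr : 0 ≤ r) (hS : ∀ n, S n ∈ A F m r) {ε : ℕ → ℝ} (hε : Tendsto ε atTop (𝓝 0))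
    (hL : ∀ n γ, gaussTerm r (L - S n) γ ≤ ε n) : L ∈ A F m r := by
  refine (mem_A_iff F).mpr (Metric.tendsto_nhds.mpr fun δ hδ => eventually_cofinite.mpr ?_)
  obtain ⟨n, hn⟩ := (hε.eventually (gt_mem_nhds hδ)).exists
  refine (finite_setOf_le_gaussTerm (hS n) hδ).subset fun γ hγ => ?_
  by_contra hsmall
  have hL' : gaussTerm r L γ < δ := by
    simpa using (gaussTerm_add_le hr (L - S n) (S n) γ).trans_lt
      (max_lt ((hL n γ).trans_lt hn) (not_le.mp hsmall))
  apply hγ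
  show dist (gaussTerm r L γ) 0 < δ
  rwa [Real.dist_eq, sub_zero, abs_of_nonneg (gaussTerm_nonneg hr L γ)]

lemma exists_tendsto_of_gaussTerm_sub_le [CompleteSpace F] (hr : 0 < r)
    {S : ℕ → MvPowerSeries (Fin m) F} (hS : ∀ n, S n ∈ A F m r) {ε : ℕ → ℝ}
    (hε : Tendsto ε atTop (𝓝 0)) (hSε : ∀ i j, i ≤ j → ∀ γ, gaussTerm r (S j - S i) γ ≤ ε i) :
    ∃ L ∈ A F m r, Tendsto S atTop (𝓝 L) := by
  have hcauchy : ∀ γ, CauchySeq fun n => coeff γ (S n) := by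
    intro γ
    have hpow : 0 < r ^ mdeg γ := pow_pos hr _
    refine Metric.cauchySeq_iff'.mpr fun δ hδ => ?_
    obtain ⟨N, hN⟩ := (hε.eventually (gt_mem_nhds (mul_pos hδ hpow))).exists
    refine ⟨N, fun n hn => ?_⟩
    rw [dist_eq_norm, ← map_sub]
    exact lt_of_mul_lt_mul_right ((hSε N n hn γ).trans_lt hN) hpow.le
  choose l hl using fun γ => cauchySeq_tendsto_of_complete (hcauchy γ)
  have hlim : Tendsto S atTop (𝓝 (l : MvPowerSeries (Fin m) F)) :=
    (MvPowerSeries.WithPiTopology.tendsto_iff_coeff_tendsto _ _ _).mpr hl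
  refine ⟨l, mem_A_of_gaussTerm_sub_le hr.le hS hε fun i γ => ?_, hlim⟩
  have hcont : Continuous fun x : MvPowerSeries (Fin m) F => gaussTerm r (x - S i) γ :=
    ((MvPowerSeries.WithPiTopology.continuous_coeff F γ).sub
      (continuous_const (y := coeff γ (S i)))).norm.mul_const (r ^ mdeg γ)
      |>.congr fun x => by simp [gaussTerm]
  exact le_of_tendsto (hcont.tendsto _ |>.comp hlim)
    (eventually_atTop.mpr ⟨i, fun j hj => hSε i j hj γ⟩)

lemma exists_tendsto_prod_range [CompleteSpace F] (hr : 0 < r) {p : ℕ → MvPowerSeries (Fin m) F}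
    (hp : ∀ k, p k ∈ A F m r) {ε : ℕ → ℝ} (hε : Tendsto ε atTop (𝓝 0)) (hanti : Antitone ε)
    (hε1 : ∀ k, ε k ≤ 1) (hpε : ∀ k γ, gaussTerm r (p k - 1) γ ≤ ε k) :
    ∃ V ∈ A F m r, Tendsto (fun n => ∏ k ∈ Finset.range n, p k) atTop (𝓝 V) := by
  set P := fun n => ∏ k ∈ Finset.range n, p k
  have hp1 : ∀ k γ, gaussTerm r (p k) γ ≤ 1 := fun k γ => by
    simpa using (gaussTerm_add_le hr.le (p k - 1) 1 γ).trans
      (max_le ((hpε k γ).trans (hε1 k)) (gaussTerm_one_le r γ))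
  have hP1 : ∀ n γ, gaussTerm r (P n) γ ≤ 1 := by
    intro n
    induction n with
    | zero => simpa [P] using gaussTerm_one_le r
    | succ n ih =>
      intro γ
      simpa [P, Finset.prod_range_succ] using gaussTerm_mul_le hr.le ih (hp1 n) γ
  have hPε : ∀ i j, i ≤ j → ∀ γ, gaussTerm r (P j - P i) γ ≤ ε i := by
    intro i j hij
    induction j, hij using Nat.le_induction with
    | base => intro γ; simpa [gaussTerm] using (gaussTerm_nonneg hr.le _ γ).trans (hpε i γ)
    | succ j hij ih =>
      intro γ
      have hsplit : P (j + 1) - P i = P j * (p j - 1) + (P j - P i) := by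
        simp only [P, Finset.prod_range_succ]; ring
      rw [hsplit]
      refine (gaussTerm_add_le hr.le _ _ γ).trans (max_le ?_ (ih γ))
      simpa using (gaussTerm_mul_le hr.le (hP1 j) (hpε j) γ).trans (by simpa using hanti hij)
  exact exists_tendsto_of_gaussTerm_sub_le hr
    (fun n => Subring.prod_mem _ fun k _ => hp k) hε hPε

lemma exists_unit_tendsto_prod_range [CompleteSpace F] (hr : 0 < r)
    {p p' : ℕ → MvPowerSeries (Fin m) F} (hp : ∀ k, p k ∈ A F m r) (hp' : ∀ k, p' k ∈ A F m r)
    (hpp' : ∀ k, p k * p' k = 1) {ε : ℕ → ℝ} (hε : Tendsto ε atTop (𝓝 0)) (hanti : Antitone ε)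
    (hε1 : ∀ k, ε k ≤ 1) (hpε : ∀ k γ, gaussTerm r (p k - 1) γ ≤ ε k)
    (hp'ε : ∀ k γ, gaussTerm r (p' k - 1) γ ≤ ε k) :
    ∃ V : (A F m r)ˣ,
      Tendsto (fun n => ∏ k ∈ Finset.range n, p k) atTop (𝓝 ((V : A F m r) : _)) := by
  obtain ⟨V, hV, hlim⟩ := exists_tendsto_prod_range hr hp hε hanti hε1 hpε
  obtain ⟨V', hV', hlim'⟩ := exists_tendsto_prod_range hr hp' hε hanti hε1 hp'ε
  have hVV' : V * V' = 1 :=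
    tendsto_nhds_unique (hlim.mul hlim') (by simp [← Finset.prod_mul_distrib, hpp'])
  exact ⟨⟨⟨V, hV⟩, ⟨V', hV'⟩, Subtype.ext hVV', Subtype.ext ((mul_comm _ _).trans hVV')⟩, hlim⟩

end Limits

section Gluing

variable {F} {m : ℕ}

lemma coe_mul_coe_inv {r : ℝ} (U : (A F m r)ˣ) :
    ((U : A F m r) : MvPowerSeries (Fin m) F) * ((U⁻¹ : (A F m r)ˣ) : A F m r) = 1 :=
  congrArg Subtype.val U.mul_inv

lemma gaussTerm_sub_one_le_div {ρ R : ℝ} (hρ : 0 < ρ) (hρR : ρ ≤ R)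
    {f g : MvPowerSeries (Fin m) F} (hf : f ∈ A F m R) (hg : g ∈ A F m R) (hfg : f * g = 1)
    (hf1 : constantCoeff f = 1) (γ : Fin m →₀ ℕ) : gaussTerm ρ (f - 1) γ ≤ ρ / R := by
  have hR : 0 < R := hρ.trans_le hρR
  have hbound : ∀ γ, gaussTerm R (f - 1) γ ≤ 1 := fun γ => by
    have hneg : gaussTerm R (-1 : MvPowerSeries (Fin m) F) γ ≤ 1 := by
      simpa [gaussTerm] using gaussTerm_one_le R γ
    rw [sub_eq_add_neg]
    refine (gaussTerm_add_le hR.le _ _ γ).trans (max_le ?_ hneg)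
    simpa [hf1] using gaussTerm_le_of_mul_eq_one hR hf hg hfg γ
  simpa using gaussTerm_le_div_mul hρ hρR (by simp [hf1]) hbound γ

/-- At radius `r_s` the factor `q_k - 1` (`k ≥ s`) has no constant term and `|q_k|_{r_k} ≤ 1`,
so its size is at most `r_s / r_k`; hence `∏_{s ≤ k < n} q_k` converges to a unit `V` of
`A^m(r_s)`. -/
lemma exists_unit_tendsto_mul [CompleteSpace F] {r : ℕ → ℝ} (hr : ∀ i, 0 < r i)
    (hmono : Monotone r) (htop : Tendsto r atTop atTop) {w : ℕ → MvPowerSeries (Fin m) F}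
    (q : ∀ i, (A F m (r i))ˣ)
    (hq : ∀ i, constantCoeff ((q i : A F m (r i)) : MvPowerSeries (Fin m) F) = 1)
    (hwq : ∀ i, w (i + 1) = q i * w i) (s : ℕ) :
    ∃ V : (A F m (r s))ˣ, Tendsto w atTop (𝓝 (V * w s)) := by
  have hq' : ∀ i, constantCoeff
      ((((q i)⁻¹ : (A F m (r i))ˣ) : A F m (r i)) : MvPowerSeries (Fin m) F) = 1 := fun i => by
    simpa [hq i] using congrArg constantCoeff (coe_mul_coe_inv (q i))
  have hle : ∀ k, r s ≤ r (k + s) := fun k => hmono (Nat.le_add_left s k)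
  have hmem : ∀ k (x : A F m (r (k + s))), (x : MvPowerSeries (Fin m) F) ∈ A F m (r s) :=
    fun k x => A_mono F (hr s) (hle k) x.2
  have hε : Tendsto (fun k => r s / r (k + s)) atTop (𝓝 0) :=
    (tendsto_const_nhds.div_atTop htop).comp (tendsto_add_atTop_nat s)
  have hanti : Antitone fun k => r s / r (k + s) := fun a b hab =>
    div_le_div_of_nonneg_left (hr s).le (hr _) (hmono (Nat.add_le_add_right hab s))
  obtain ⟨V, hV⟩ := exists_unit_tendsto_prod_range (hr s)
    (p := fun k => ((q (k + s) : A F m (r (k + s))) : MvPowerSeries (Fin m) F))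
    (p' := fun k => (((q (k + s))⁻¹ : (A F m (r (k + s)))ˣ) : A F m (r (k + s))))
    (fun k => hmem k (q (k + s))) (fun k => hmem k ((q (k + s))⁻¹ : (A F m (r (k + s)))ˣ))
    (fun k => coe_mul_coe_inv (q (k + s))) hε hanti
    (fun k => div_le_one_of_le₀ (hle k) (hr _).le)
    (fun k => gaussTerm_sub_one_le_div (hr s) (hle k) (q _).1.2 (q _)⁻¹.1.2
      (coe_mul_coe_inv _) (hq _))
    (fun k => gaussTerm_sub_one_le_div (hr s) (hle k) (q _)⁻¹.1.2 (q _).1.2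
      ((mul_comm _ _).trans (coe_mul_coe_inv _)) (hq' _))
  have hws : ∀ n, w (n + s) =
      (∏ k ∈ Finset.range n, ((q (k + s) : A F m (r (k + s))) : MvPowerSeries (Fin m) F)) *
        w s := by
    intro n
    induction n with
    | zero => simp
    | succ n ih =>
      rw [Finset.prod_range_succ, show n + 1 + s = n + s + 1 by omega, hwq, ih]
      ring
  refine ⟨V, (tendsto_add_atTop_iff_nat s).mp ?_⟩
  simpa only [hws] using hV.mul_const (w s)

/-- `G` is the limit of the `w_n`, which equals `V_s w_s ∈ A^m(r_s)` for every `s`. -/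
theorem exists_entire_eq_unit_mul_of_constantCoeff_eq_one [CompleteSpace F] {r : ℕ → ℝ}
    (hr : ∀ i, 0 < r i) (hmono : Monotone r) (htop : Tendsto r atTop atTop)
    {w : ℕ → MvPowerSeries (Fin m) F} (hw : ∀ i, w i ∈ A F m (r i)) (q : ∀ i, (A F m (r i))ˣ)
    (hq : ∀ i, constantCoeff ((q i : A F m (r i)) : MvPowerSeries (Fin m) F) = 1)
    (hwq : ∀ i, w (i + 1) = q i * w i) :
    ∃ G ∈ Ent F m, ∀ s, ∃ V : (A F m (r s))ˣ, G = V * w s := by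
  choose V hV using exists_unit_tendsto_mul hr hmono htop q hq hwq
  refine ⟨V 0 * w 0, fun ρ hρ => ?_, fun s => ⟨V s, tendsto_nhds_unique (hV 0) (hV s)⟩⟩
  obtain ⟨s, hs⟩ := (htop.eventually_ge_atTop ρ).exists
  rw [tendsto_nhds_unique (hV 0) (hV s)]
  exact A_mono F (VG.pos F hρ) hs (Subring.mul_mem _ (V s).1.2 (hw s))

end Gluing

section Normalization

variable {F} {m : ℕ} {r : ℝ}

lemma C_mem_A (a : F) : (C a : MvPowerSeries (Fin m) F) ∈ A F m r := by
  refine (mem_A_iff F).mpr (tendsto_const_nhds.congr' (eventuallyEq_of_mem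
    (Set.finite_singleton (0 : Fin m →₀ ℕ)).compl_mem_cofinite fun γ hγ => ?_))
  simp [coeff_C, show γ ≠ 0 by simpa using hγ]

noncomputable def constUnit (r : ℝ) (a : Fˣ) : (A F m r)ˣ :=
  Units.map (C.codRestrict (A F m r) C_mem_A).toMonoidHom a

lemma coe_constUnit (r : ℝ) (a : Fˣ) :
    (((constUnit r a : (A F m r)ˣ) : A F m r) : MvPowerSeries (Fin m) F) = C (a : F) := rfl

noncomputable def constantCoeffUnit (U : (A F m r)ˣ) : Fˣ :=
  Units.map (constantCoeff.comp (A F m r).subtype).toMonoidHom U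

noncomputable def normalizeUnit (U : (A F m r)ˣ) : (A F m r)ˣ :=
  constUnit r (constantCoeffUnit U)⁻¹ * U

lemma coe_normalizeUnit (U : (A F m r)ˣ) :
    ((normalizeUnit U : A F m r) : MvPowerSeries (Fin m) F) =
      C (((constantCoeffUnit U)⁻¹ : Fˣ) : F) * ((U : A F m r) : MvPowerSeries (Fin m) F) :=
  rfl

lemma constantCoeff_normalizeUnit (U : (A F m r)ˣ) :
    constantCoeff ((normalizeUnit U : A F m r) : MvPowerSeries (Fin m) F) = 1 := by
  rw [coe_normalizeUnit, map_mul, constantCoeff_C]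
  exact (constantCoeffUnit U).inv_mul

/-- Rescaling `g_i` by `Λ_i⁻¹`, the product of the constant terms of `u_0⁻¹, …, u_{i-1}⁻¹`,
turns the transition units `u_i⁻¹` into units with constant term `1`. -/
theorem exists_entire_eq_mul_unit [CompleteSpace F] {r : ℕ → ℝ} (hr : ∀ i, 0 < r i)
    (hmono : Monotone r) (htop : Tendsto r atTop atTop) (g : ∀ i, A F m (r i))
    (u : ∀ i, (A F m (r i))ˣ)
    (hu : ∀ i, (g i : MvPowerSeries (Fin m) F) =
      ((u i : A F m (r i)) : MvPowerSeries (Fin m) F) * g (i + 1)) :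
    ∃ (G : Ent F m) (v : ∀ i, (A F m (r i))ˣ), ∀ i,
      (g i : MvPowerSeries (Fin m) F) = G * ((v i : A F m (r i)) : MvPowerSeries (Fin m) F) := by
  obtain ⟨Λ, hΛ⟩ : ∃ Λ : ℕ → Fˣ, ∀ i, Λ (i + 1) = Λ i * constantCoeffUnit (u i)⁻¹ :=
    ⟨fun n => ∏ k ∈ Finset.range n, constantCoeffUnit (u k)⁻¹,
      fun i => Finset.prod_range_succ _ _⟩
  obtain ⟨w, hw⟩ : ∃ w : ℕ → MvPowerSeries (Fin m) F,
      ∀ i, w i = C (((Λ i)⁻¹ : Fˣ) : F) * (g i : MvPowerSeries (Fin m) F) := ⟨_, fun _ => rfl⟩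
  have hwq : ∀ i, w (i + 1) =
      ((normalizeUnit (u i)⁻¹ : A F m (r i)) : MvPowerSeries (Fin m) F) * w i := by
    intro i
    have hsucc : (g (i + 1) : MvPowerSeries (Fin m) F) = ((u i)⁻¹ : (A F m (r i))ˣ) * g i := by
      rw [hu i, ← mul_assoc, mul_comm _ ((u i : A F m (r i)) : MvPowerSeries (Fin m) F),
        coe_mul_coe_inv, one_mul]
    rw [hw, hw, hsucc, coe_normalizeUnit, hΛ, mul_inv, Units.val_mul, map_mul]
    ring
  obtain ⟨G, hG, hGV⟩ := exists_entire_eq_unit_mul_of_constantCoeff_eq_one hr hmono htop (w := w)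
    (fun i => hw i ▸ Subring.mul_mem _ (C_mem_A _) (g i).2) (fun i => normalizeUnit (u i)⁻¹)
    (fun i => constantCoeff_normalizeUnit _) hwq
  choose V hV using hGV
  refine ⟨⟨G, hG⟩, fun i => constUnit (r i) (Λ i) * (V i)⁻¹, fun i => ?_⟩
  have hC : (C (Λ i : F) : MvPowerSeries (Fin m) F) * C (((Λ i)⁻¹ : Fˣ) : F) = 1 := by
    rw [← map_mul, Units.mul_inv, map_one]
  show _ = G * _
  rw [Units.val_mul, Subring.coe_mul, coe_constUnit, hV i, hw i]
  linear_combination (-(C (Λ i : F) * C (((Λ i)⁻¹ : Fˣ) : F) * (g i : MvPowerSeries (Fin m) F)))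
    * coe_mul_coe_inv (V i) - (g i : MvPowerSeries (Fin m) F) * hC

end Normalization

theorem statement16 [CompleteSpace F]
    (m : ℕ) (r : ℕ → ℝ) (hVG : ∀ i, r i ∈ VG F)
    (hmono : StrictMono r) (htop : Tendsto r atTop atTop)
    (g : ∀ i : ℕ, A F m (r i))
    (u : ∀ i j : ℕ, i < j → (A F m (r i))ˣ)
    (hu : ∀ (i j : ℕ) (h : i < j),
      (g i : MvPowerSeries (Fin m) F) =
        ((u i j h : A F m (r i)) : MvPowerSeries (Fin m) F) *
          (g j : MvPowerSeries (Fin m) F)) :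
    ∃ (G : Ent F m) (v : ∀ i : ℕ, (A F m (r i))ˣ),
      ∀ i : ℕ, (g i : MvPowerSeries (Fin m) F) =
        (G : MvPowerSeries (Fin m) F) *
          ((v i : A F m (r i)) : MvPowerSeries (Fin m) F) :=
  exists_entire_eq_mul_unit (fun i => VG.pos F (hVG i)) hmono.monotone htop g
    (fun i => u i (i + 1) (Nat.lt_succ_self i)) fun i => hu i (i + 1) _

end NA
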